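/- Let d ≥ 1, 0 < α ≤ 1, 1 ≤ p < ∞, x₀ ∈ ℝ^d and δ > 0. There is a constant C, depending only on α, d and p, such that for every f ∈ L^p(ℝ^d) that vanishes almost everywhere on the ball {x : |x − x₀| < δ}, and every μ with μδ > 1, |E_{α,μ} f(x₀)| = |(A_{α,μ} ⋆ f)(x₀)| ≤ C·μ^{−α/2}·δ^{−(d/p + α/2)}·‖f‖_{L^p}. In particular, if f ∈ L^p vanishes a.e. near x₀, then E_{α,μ} f(x₀) = O(μ^{−α/2}) as μ → ∞. -/

import Mathlib

open MeasureTheory Real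
open scoped ENNReal

noncomputable section

/-- The coefficients `a_{α,j} = |binom(α/2, j)| = (α/2)·∏_{k=1}^{j−1}(k − α/2)/j!`. -/
def aCoeff (α : ℝ) (j : ℕ) : ℝ :=
  (α / 2) * (∏ k ∈ Finset.Icc 1 (j - 1), ((k : ℝ) - α / 2)) / (Nat.factorial j)

/-- The Bessel kernel `G_s` on `ℝ^d`. -/
def besselKernel (d : ℕ) (s : ℝ) (x : EuclideanSpace ℝ (Fin d)) : ℝ :=
  (1 / Real.Gamma (s / 2)) *
    ∫ t in Set.Ioi (0 : ℝ),
      (4 * π * t) ^ (-(d : ℝ) / 2) * Real.exp (-‖x‖ ^ 2 / (4 * t)) * Real.exp (-t) *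
        t ^ (s / 2 - 1)

/-- The kernel `A_{α,μ}(z) = μ^d ∑_{j≥1} a_{α,j} G_{2j}(μ z)`. -/
def AKernel (d : ℕ) (α μ : ℝ) (z : EuclideanSpace ℝ (Fin d)) : ℝ :=
  μ ^ d * ∑' j : ℕ, aCoeff α (j + 1) * besselKernel d (2 * (j + 1)) (μ • z)

/-- The Bessel–Riesz quotient operator `E_{α,μ} f = f − A_{α,μ} ⋆ f`. -/
def Eop (d : ℕ) (α μ : ℝ) (f : EuclideanSpace ℝ (Fin d) → ℝ)
    (x : EuclideanSpace ℝ (Fin d)) : ℝ :=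
  f x - ∫ y, AKernel d α μ (x - y) * f y

/-- The `L^p` modulus of continuity `ω(f,t)_p = sup_{|h| ≤ t} ‖f(·+h) − f‖_p`. -/
def modCont (d : ℕ) (p : ℝ≥0∞) (f : EuclideanSpace ℝ (Fin d) → ℝ) (t : ℝ) : ℝ≥0∞ :=
  ⨆ h ∈ {h : EuclideanSpace ℝ (Fin d) | ‖h‖ ≤ t},
    eLpNorm (fun x => f (x + h) - f x) p volume

/-!
Each Bessel kernel decays like a power of `|w|`: bounding `e^{-|w|²/4t} ≤ C_m (4t/|w|²)^m` inside
the subordination integral, with `m = d/2 + α/4`, gives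
`G_{2(j+1)}(w) ≤ C |w|^{-(d+α/2)} Γ(j+1+α/4)/j!`. The coefficients
`b_j = a_{α,j+1} Γ(j+1+α/4)/j!` are summable because `(j+1) b_j` decreases by at least
`(α/4) b_j` at every step, so `A_{α,μ}(z) ≤ K μ^{-α/2} |z|^{-(d+α/2)}`. As `f` vanishes on the
`δ`-ball, Hölder's inequality bounds `(A_{α,μ} ⋆ f)(x₀)` by `K μ^{-α/2} ‖f‖_p` times the
`L^{p'}` norm of `|z|^{-(d+α/2)}` outside that ball; by scaling this norm is
`δ^{-(d/p+α/2)}` times its value for `δ = 1`, which is finite since `(d+α/2) p' > d`.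
-/

open Module

lemma aCoeff_nonneg {α : ℝ} (hα : 0 ≤ α) (hα2 : α ≤ 2) (j : ℕ) : 0 ≤ aCoeff α j := by
  refine div_nonneg (mul_nonneg (by linarith) (Finset.prod_nonneg fun k hk => ?_)) (by positivity)
  have : (1 : ℝ) ≤ k := by exact_mod_cast (Finset.mem_Icc.1 hk).1
  linarith

lemma aCoeff_add_two (α : ℝ) (j : ℕ) :
    aCoeff α (j + 2) = aCoeff α (j + 1) * ((j + 1 : ℝ) - α / 2) / (j + 2) := by
  rw [aCoeff, aCoeff, show j + 2 - 1 = j + 1 by omega, Nat.add_sub_cancel,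
    Finset.prod_Icc_succ_top (by omega), Nat.factorial_succ (j + 1)]
  push_cast
  field_simp
  ring

/-- By `besselKernel_le` with `m = d / 2 + α / 4`, the `j`-th term of `AKernel` is at most a
multiple of this. -/
def majorantCoeff (α : ℝ) (j : ℕ) : ℝ :=
  aCoeff α (j + 1) * Gamma (j + 1 + α / 4) / Gamma (j + 1)

lemma majorantCoeff_nonneg {α : ℝ} (hα : 0 ≤ α) (hα2 : α ≤ 2) (j : ℕ) : 0 ≤ majorantCoeff α j :=
  div_nonneg (mul_nonneg (aCoeff_nonneg hα hα2 _) (Gamma_pos_of_pos (by positivity)).le)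
    (Gamma_pos_of_pos (by positivity)).le

lemma majorantCoeff_succ {α : ℝ} (hα : 0 ≤ α) (j : ℕ) :
    (j + 2 : ℝ) * majorantCoeff α (j + 1) =
      majorantCoeff α j * ((j + 1 - α / 2) * (j + 1 + α / 4)) / (j + 1) := by
  have h1 : ((j + 1 : ℕ) : ℝ) + 1 + α / 4 = (j + 1 + α / 4) + 1 := by push_cast; ring
  have h2 : ((j + 1 : ℕ) : ℝ) + 1 = (j + 1) + 1 := by push_cast; ring
  rw [majorantCoeff, majorantCoeff, aCoeff_add_two, h1, h2, Gamma_add_one (by positivity),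
    Gamma_add_one (by positivity)]
  have := Gamma_pos_of_pos (show (0 : ℝ) < j + 1 by positivity)
  field_simp

lemma majorantCoeff_telescope {α : ℝ} (hα : 0 < α) (hα2 : α ≤ 2) (j : ℕ) :
    α / 4 * majorantCoeff α j + (j + 2) * majorantCoeff α (j + 1) ≤
      (j + 1) * majorantCoeff α j := by
  have hb := majorantCoeff_nonneg hα.le hα2 j
  have key : majorantCoeff α j * ((j + 1 - α / 2) * (j + 1 + α / 4)) / (j + 1) ≤
      (j + 1 - α / 4) * majorantCoeff α j := by
    rw [div_le_iff₀ (by positivity)]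
    nlinarith [mul_nonneg hb (mul_nonneg hα.le hα.le)]
  linarith [majorantCoeff_succ hα.le j]

lemma sum_range_majorantCoeff_le {α : ℝ} (hα : 0 < α) (hα2 : α ≤ 2) (N : ℕ) :
    ∑ j ∈ Finset.range N, majorantCoeff α j ≤ 4 / α * majorantCoeff α 0 := by
  have htelescope (n : ℕ) : α / 4 * ∑ j ∈ Finset.range n, majorantCoeff α j +
      (n + 1) * majorantCoeff α n ≤ majorantCoeff α 0 := by
    induction n with
    | zero => simp
    | succ n ih =>
      rw [Finset.sum_range_succ]
      push_cast
      linarith [majorantCoeff_telescope hα hα2 n]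
  have hN : 0 ≤ (N + 1 : ℝ) * majorantCoeff α N :=
    mul_nonneg (by positivity) (majorantCoeff_nonneg hα.le hα2 N)
  rw [div_mul_eq_mul_div, le_div_iff₀ hα]
  linarith [htelescope N]

lemma summable_majorantCoeff {α : ℝ} (hα : 0 < α) (hα2 : α ≤ 2) : Summable (majorantCoeff α) :=
  summable_of_sum_range_le (majorantCoeff_nonneg hα.le hα2) (sum_range_majorantCoeff_le hα hα2)

lemma tsum_majorantCoeff_le {α : ℝ} (hα : 0 < α) (hα2 : α ≤ 2) :
    ∑' j, majorantCoeff α j ≤ 4 / α * majorantCoeff α 0 :=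
  Real.tsum_le_of_sum_range_le (majorantCoeff_nonneg hα.le hα2)
    (sum_range_majorantCoeff_le hα hα2)

lemma rpow_mul_exp_neg_le {m u : ℝ} (hm : 0 ≤ m) (hu : 0 < u) :
    u ^ m * exp (-u) ≤ (⌈m⌉₊).factorial + 1 := by
  have hpow : u ^ m ≤ u ^ ⌈m⌉₊ + 1 := by
    rcases le_or_gt u 1 with hu1 | hu1
    · linarith [rpow_le_one hu.le hu1 hm, pow_nonneg hu.le ⌈m⌉₊]
    · rw [← rpow_natCast]
      linarith [rpow_le_rpow_of_exponent_le hu1.le (Nat.le_ceil m)]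
  have hfact : u ^ ⌈m⌉₊ * exp (-u) ≤ (⌈m⌉₊).factorial := by
    have h := pow_div_factorial_le_exp (x := u) hu.le ⌈m⌉₊
    rw [div_le_iff₀ (by positivity)] at h
    rw [exp_neg, ← div_eq_mul_inv, div_le_iff₀ (exp_pos u)]
    linarith
  calc u ^ m * exp (-u) ≤ (u ^ ⌈m⌉₊ + 1) * exp (-u) := by gcongr
    _ = u ^ ⌈m⌉₊ * exp (-u) + exp (-u) := by ring
    _ ≤ (⌈m⌉₊).factorial + 1 := add_le_add hfact (exp_le_one_iff.2 (by linarith))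

def besselDecayConst (d : ℕ) (m : ℝ) : ℝ :=
  (4 * π) ^ (-(d : ℝ) / 2) * ((⌈m⌉₊).factorial + 1) * 4 ^ m

lemma besselDecayConst_nonneg (d : ℕ) (m : ℝ) : 0 ≤ besselDecayConst d m := by
  unfold besselDecayConst; positivity

lemma besselKernel_integrand_le {d : ℕ} {s m : ℝ} (hm : 0 ≤ m) {w : EuclideanSpace ℝ (Fin d)}
    (hw : w ≠ 0) {t : ℝ} (ht : 0 < t) :
    (4 * π * t) ^ (-(d : ℝ) / 2) * exp (-‖w‖ ^ 2 / (4 * t)) * exp (-t) * t ^ (s / 2 - 1) ≤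
      besselDecayConst d m * ‖w‖ ^ (-(2 * m)) * (exp (-t) * t ^ (s / 2 + m - d / 2 - 1)) := by
  have hw2 : 0 < ‖w‖ ^ 2 := by positivity
  have hu : 0 < ‖w‖ ^ 2 / (4 * t) := by positivity
  have hexp :
      exp (-‖w‖ ^ 2 / (4 * t)) ≤ ((⌈m⌉₊).factorial + 1) * (‖w‖ ^ 2 / (4 * t)) ^ (-m) := by
    rw [rpow_neg hu.le, ← div_eq_mul_inv, le_div_iff₀ (by positivity), mul_comm, neg_div]
    exact rpow_mul_exp_neg_le hm hu
  have hsplit : (‖w‖ ^ 2 / (4 * t)) ^ (-m) = ‖w‖ ^ (-(2 * m)) * 4 ^ m * t ^ m := by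
    rw [div_rpow hw2.le (by positivity), mul_rpow (by norm_num) ht.le, ← rpow_natCast,
      ← rpow_mul (norm_nonneg _), rpow_neg (by positivity), rpow_neg (norm_nonneg _),
      rpow_neg (by positivity)]
    push_cast
    field_simp
    rw [← rpow_add (norm_pos_iff.2 hw)]
    simp
  have hpow : t ^ (-(d : ℝ) / 2) * t ^ m * t ^ (s / 2 - 1) = t ^ (s / 2 + m - d / 2 - 1) := by
    rw [← rpow_add ht, ← rpow_add ht]
    ring_nf
  rw [mul_rpow (by positivity) ht.le]
  calc (4 * π) ^ (-(d : ℝ) / 2) * t ^ (-(d : ℝ) / 2) * exp (-‖w‖ ^ 2 / (4 * t)) * exp (-t) *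
        t ^ (s / 2 - 1)
      ≤ (4 * π) ^ (-(d : ℝ) / 2) * t ^ (-(d : ℝ) / 2) *
          (((⌈m⌉₊).factorial + 1) * (‖w‖ ^ (-(2 * m)) * 4 ^ m * t ^ m)) * exp (-t) *
          t ^ (s / 2 - 1) := by
        rw [← hsplit]; gcongr
    _ = _ := by
        rw [← hpow, besselDecayConst]
        ring

lemma besselKernel_nonneg {d : ℕ} {s : ℝ} (hs : 0 < s) (w : EuclideanSpace ℝ (Fin d)) :
    0 ≤ besselKernel d s w := by
  have hΓ := Gamma_pos_of_pos (half_pos hs)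
  refine mul_nonneg (by positivity)
    (setIntegral_nonneg measurableSet_Ioi fun t (ht : 0 < t) => ?_)
  have : 0 < 4 * π * t := by positivity
  positivity

lemma besselKernel_le {d : ℕ} {s m : ℝ} (hs : 0 < s) (hm : 0 ≤ m)
    (hsm : (d : ℝ) / 2 < s / 2 + m) {w : EuclideanSpace ℝ (Fin d)} (hw : w ≠ 0) :
    besselKernel d s w ≤
      besselDecayConst d m * ‖w‖ ^ (-(2 * m)) * (Gamma (s / 2 + m - d / 2) / Gamma (s / 2)) := by
  have hx : 0 < s / 2 + m - d / 2 := by linarith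
  have hΓ := Gamma_pos_of_pos (half_pos hs)
  have hint : (∫ t in Set.Ioi (0 : ℝ),
      (4 * π * t) ^ (-(d : ℝ) / 2) * exp (-‖w‖ ^ 2 / (4 * t)) * exp (-t) * t ^ (s / 2 - 1)) ≤
      besselDecayConst d m * ‖w‖ ^ (-(2 * m)) * Gamma (s / 2 + m - d / 2) := by
    rw [Gamma_eq_integral hx, ← integral_const_mul]
    refine integral_mono_of_nonneg ?_ ((GammaIntegral_convergent hx).const_mul _) ?_
    · filter_upwards [ae_restrict_mem measurableSet_Ioi] with t (ht : 0 < t)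
      have : 0 < 4 * π * t := by positivity
      positivity
    · filter_upwards [ae_restrict_mem measurableSet_Ioi] with t ht
      exact besselKernel_integrand_le hm hw ht
  calc besselKernel d s w
      ≤ 1 / Gamma (s / 2) *
          (besselDecayConst d m * ‖w‖ ^ (-(2 * m)) * Gamma (s / 2 + m - d / 2)) :=
        mul_le_mul_of_nonneg_left hint (by positivity)
    _ = _ := by ring

lemma tsum_aCoeff_mul_besselKernel_le {d : ℕ} {α : ℝ} (hα : 0 < α) (hα2 : α ≤ 2)
    {w : EuclideanSpace ℝ (Fin d)} (hw : w ≠ 0) :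
    ∑' j : ℕ, aCoeff α (j + 1) * besselKernel d (2 * (j + 1)) w ≤
      besselDecayConst d (d / 2 + α / 4) * (4 / α * majorantCoeff α 0) *
        ‖w‖ ^ (-(d + α / 2)) := by
  set K := besselDecayConst d (d / 2 + α / 4) * ‖w‖ ^ (-(d + α / 2)) with hK
  have hK0 : 0 ≤ K := mul_nonneg (besselDecayConst_nonneg _ _) (by positivity)
  have hterm (j : ℕ) :
      aCoeff α (j + 1) * besselKernel d (2 * (j + 1)) w ≤ K * majorantCoeff α j := by
    have h := besselKernel_le (s := 2 * (j + 1)) (m := d / 2 + α / 4) (by positivity)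
      (by positivity) (by have : (0 : ℝ) ≤ j := j.cast_nonneg; linarith) hw
    rw [show (2 * (j + 1 : ℝ)) / 2 = j + 1 by ring, show (j + 1 : ℝ) + (d / 2 + α / 4) - d / 2 =
      j + 1 + α / 4 by ring, show -(2 * ((d : ℝ) / 2 + α / 4)) = -(d + α / 2) by ring] at h
    calc aCoeff α (j + 1) * besselKernel d (2 * (j + 1)) w
        ≤ aCoeff α (j + 1) * (K * (Gamma (j + 1 + α / 4) / Gamma (j + 1))) :=
          mul_le_mul_of_nonneg_left (h.trans_eq (by ring)) (aCoeff_nonneg hα.le hα2 _)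
      _ = K * majorantCoeff α j := by rw [majorantCoeff]; ring
  have hsummable := (summable_majorantCoeff hα hα2).mul_left K
  calc ∑' j : ℕ, aCoeff α (j + 1) * besselKernel d (2 * (j + 1)) w
      ≤ ∑' j, K * majorantCoeff α j :=
        (hsummable.of_nonneg_of_le (fun j => mul_nonneg (aCoeff_nonneg hα.le hα2 _)
          (besselKernel_nonneg (by positivity) w)) hterm).tsum_le_tsum hterm hsummable
    _ = K * ∑' j, majorantCoeff α j := tsum_mul_left
    _ ≤ K * (4 / α * majorantCoeff α 0) :=
        mul_le_mul_of_nonneg_left (tsum_majorantCoeff_le hα hα2) hK0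
    _ = _ := by rw [hK]; ring

lemma exists_abs_AKernel_le (d : ℕ) {α : ℝ} (hα : 0 < α) (hα2 : α ≤ 2) :
    ∃ K, 0 ≤ K ∧ ∀ μ : ℝ, 0 < μ → ∀ z : EuclideanSpace ℝ (Fin d), z ≠ 0 →
      |AKernel d α μ z| ≤ K * μ ^ (-(α / 2)) * ‖z‖ ^ (-(d + α / 2)) := by
  refine ⟨besselDecayConst d (d / 2 + α / 4) * (4 / α * majorantCoeff α 0),
    mul_nonneg (besselDecayConst_nonneg _ _)
      (mul_nonneg (by positivity) (majorantCoeff_nonneg hα.le hα2 0)), fun μ hμ z hz => ?_⟩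
  have hA : 0 ≤ AKernel d α μ z := mul_nonneg (by positivity) (tsum_nonneg fun j =>
    mul_nonneg (aCoeff_nonneg hα.le hα2 _) (besselKernel_nonneg (by positivity) _))
  have hscale : μ ^ d * ‖μ • z‖ ^ (-(d + α / 2)) = μ ^ (-(α / 2)) * ‖z‖ ^ (-(d + α / 2)) := by
    rw [norm_smul, norm_of_nonneg hμ.le, mul_rpow hμ.le (norm_nonneg _), ← mul_assoc,
      ← rpow_natCast, ← rpow_add hμ]
    ring_nf
  rw [abs_of_nonneg hA, AKernel]
  calc μ ^ d * ∑' j : ℕ, aCoeff α (j + 1) * besselKernel d (2 * (j + 1)) (μ • z)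
      ≤ μ ^ d * (besselDecayConst d (d / 2 + α / 4) * (4 / α * majorantCoeff α 0) *
          ‖μ • z‖ ^ (-(d + α / 2))) :=
        mul_le_mul_of_nonneg_left
          (tsum_aCoeff_mul_besselKernel_le hα hα2 (smul_ne_zero hμ.ne' hz)) (by positivity)
    _ = _ := by rw [mul_left_comm, hscale]; ring

section TailWeight

variable {E : Type*} [NormedAddCommGroup E]

def tailWeight (β δ : ℝ) (z : E) : ℝ := {z : E | δ ≤ ‖z‖}.indicator (fun z => ‖z‖ ^ (-β)) z

lemma tailWeight_nonneg (β δ : ℝ) (z : E) : 0 ≤ tailWeight β δ z :=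
  Set.indicator_nonneg (fun _ _ => by positivity) z

lemma tailWeight_one_le {β : ℝ} (hβ : 0 ≤ β) (z : E) :
    tailWeight β 1 z ≤ 2 ^ β * (1 + ‖z‖) ^ (-β) := by
  by_cases h : 1 ≤ ‖z‖
  · rw [tailWeight, Set.indicator_of_mem (show z ∈ {z : E | 1 ≤ ‖z‖} from h),
      rpow_neg (by positivity), rpow_neg (by positivity), ← div_eq_mul_inv,
      le_div_iff₀ (by positivity), ← div_eq_inv_mul, div_le_iff₀ (by positivity),
      ← mul_rpow (by positivity) (by positivity)]
    exact rpow_le_rpow (by positivity) (by linarith) hβ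
  · rw [tailWeight, Set.indicator_of_notMem (show z ∉ {z : E | 1 ≤ ‖z‖} from h)]
    positivity

lemma measurable_tailWeight [MeasurableSpace E] [BorelSpace E] (β δ : ℝ) :
    Measurable (tailWeight (E := E) β δ) :=
  (measurable_norm.pow_const _).indicator (measurableSet_le measurable_const measurable_norm)

lemma tailWeight_eq_smul [NormedSpace ℝ E] (β : ℝ) {δ : ℝ} (hδ : 0 < δ) (z : E) :
    tailWeight β δ z = δ ^ (-β) * tailWeight β 1 (δ⁻¹ • z) := by
  have hnorm : ‖δ⁻¹ • z‖ = δ⁻¹ * ‖z‖ := by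
    rw [norm_smul, Real.norm_of_nonneg (by positivity)]
  have hmem : δ ≤ ‖z‖ ↔ 1 ≤ ‖δ⁻¹ • z‖ := by
    rw [hnorm, ← div_eq_inv_mul, one_le_div hδ]
  by_cases h : δ ≤ ‖z‖
  · simp only [tailWeight, Set.indicator_of_mem (show z ∈ {z : E | δ ≤ ‖z‖} from h),
      Set.indicator_of_mem (show δ⁻¹ • z ∈ {z : E | 1 ≤ ‖z‖} from hmem.1 h), hnorm,
      mul_rpow (inv_nonneg.2 hδ.le) (norm_nonneg z), inv_rpow hδ.le, ← mul_assoc,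
      rpow_neg hδ.le, inv_inv, inv_mul_cancel₀ (rpow_pos_of_pos hδ β).ne', one_mul]
  · simp only [tailWeight, Set.indicator_of_notMem (show z ∉ {z : E | δ ≤ ‖z‖} from h),
      Set.indicator_of_notMem (show δ⁻¹ • z ∉ {z : E | 1 ≤ ‖z‖} from mt hmem.2 h), mul_zero]

variable [NormedSpace ℝ E] [MeasurableSpace E] [BorelSpace E] [FiniteDimensional ℝ E]
  (μ : Measure E) [μ.IsAddHaarMeasure]

theorem eLpNorm_comp_smul {F : Type*} [NormedAddCommGroup F] (g : E → F) {r : ℝ} (hr : r ≠ 0)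
    (q : ℝ≥0∞) :
    eLpNorm (fun x => g (r • x)) q μ =
      ENNReal.ofReal |(r ^ finrank ℝ E)⁻¹| ^ (1 / q).toReal * eLpNorm g q μ := by
  rw [← smul_eq_mul, ← eLpNorm_smul_measure_of_ne_zero (by simp [hr]),
    ← Measure.map_addHaar_smul μ hr, (measurableEmbedding_const_smul₀ hr).eLpNorm_map_measure]
  rfl

lemma memLp_one_add_norm_rpow_neg {β : ℝ} (hβ : (finrank ℝ E : ℝ) < β) {q : ℝ≥0∞}
    (hq : 1 ≤ q) : MemLp (fun z : E => (1 + ‖z‖) ^ (-β)) q μ := by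
  have hβ0 : 0 ≤ β := (Nat.cast_nonneg _).trans hβ.le
  have hmeas : AEStronglyMeasurable (fun z : E => (1 + ‖z‖) ^ (-β)) μ :=
    Measurable.aestronglyMeasurable (by fun_prop)
  rcases eq_or_ne q ∞ with rfl | hq_top
  · refine memLp_top_of_bound hmeas 1 (ae_of_all _ fun z => ?_)
    rw [norm_of_nonneg (by positivity)]
    exact rpow_le_one_of_one_le_of_nonpos (by linarith [norm_nonneg z]) (by linarith)
  have hq0 : q ≠ 0 := (zero_lt_one.trans_le hq).ne'
  rw [← memLp_norm_rpow_iff hmeas hq0 hq_top, ENNReal.div_self hq0 hq_top,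
    memLp_one_iff_integrable]
  have hq1 : 1 ≤ q.toReal := by
    simpa using ENNReal.toReal_mono hq_top hq
  refine (integrable_one_add_norm (r := β * q.toReal) (by nlinarith)).congr
    (ae_of_all _ fun z => ?_)
  simp only [norm_of_nonneg (rpow_nonneg (by positivity : (0:ℝ) ≤ 1 + ‖z‖) _)]
  rw [← rpow_mul (by positivity)]
  ring_nf

lemma memLp_tailWeight_one {β : ℝ} (hβ : (finrank ℝ E : ℝ) < β) {q : ℝ≥0∞} (hq : 1 ≤ q) :
    MemLp (tailWeight β 1) q μ :=
  ((memLp_one_add_norm_rpow_neg μ hβ hq).const_mul (2 ^ β)).mono'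
    (measurable_tailWeight β 1).aestronglyMeasurable (ae_of_all _ fun z => by
      rw [norm_of_nonneg (tailWeight_nonneg β 1 z)]
      exact tailWeight_one_le ((Nat.cast_nonneg _).trans hβ.le) z)

lemma eLpNorm_tailWeight (β : ℝ) {δ : ℝ} (hδ : 0 < δ) (q : ℝ≥0∞) :
    eLpNorm (tailWeight β δ) q μ =
      ENNReal.ofReal (δ ^ ((finrank ℝ E : ℝ) / q.toReal - β)) *
        eLpNorm (tailWeight β 1) q μ := by
  have hscale : tailWeight β δ = δ ^ (-β) • fun z : E => tailWeight β 1 (δ⁻¹ • z) :=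
    funext (tailWeight_eq_smul β hδ)
  rw [hscale, eLpNorm_const_smul, eLpNorm_comp_smul μ _ (inv_ne_zero hδ.ne'),
    inv_pow, inv_inv, abs_of_pos (by positivity), ← mul_assoc,
    Real.enorm_of_nonneg (by positivity), ENNReal.ofReal_rpow_of_pos (by positivity),
    ← rpow_natCast, ← rpow_mul hδ.le, ← ENNReal.ofReal_mul (by positivity), ← rpow_add hδ,
    one_div, ENNReal.toReal_inv, ← div_eq_mul_inv, neg_add_eq_sub]

lemma memLp_tailWeight {β : ℝ} (hβ : (finrank ℝ E : ℝ) < β) {δ : ℝ} (hδ : 0 < δ) {q : ℝ≥0∞}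
    (hq : 1 ≤ q) : MemLp (tailWeight β δ) q μ := by
  refine ⟨(measurable_tailWeight β δ).aestronglyMeasurable, ?_⟩
  rw [eLpNorm_tailWeight μ β hδ]
  exact ENNReal.mul_lt_top ENNReal.ofReal_lt_top (memLp_tailWeight_one μ hβ hq).eLpNorm_lt_top

lemma abs_integral_mul_le_of_vanishing {k f : E → ℝ} {x₀ : E} {β δ M : ℝ} {p q : ℝ≥0∞}
    [p.HolderConjugate q] (hM : 0 ≤ M) (hk : ∀ z, δ ≤ ‖z‖ → |k z| ≤ M * ‖z‖ ^ (-β))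
    (hW : MemLp (tailWeight β δ) q μ) (hf : MemLp f p μ)
    (hvanish : ∀ᵐ y ∂μ, ‖y - x₀‖ < δ → f y = 0) :
    |∫ y, k (x₀ - y) * f y ∂μ| ≤
      M * (eLpNorm (tailWeight β δ) q μ).toReal * (eLpNorm f p μ).toReal := by
  have hWmeas : Measurable fun y => tailWeight β δ (x₀ - y) :=
    (measurable_tailWeight β δ).comp (measurable_const_sub x₀)
  have hpoint : ∀ᵐ y ∂μ, ENNReal.ofReal ‖k (x₀ - y) * f y‖ ≤
      ENNReal.ofReal M * ‖tailWeight β δ (x₀ - y) * f y‖ₑ := by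
    filter_upwards [hvanish] with y hy
    by_cases hball : ‖y - x₀‖ < δ
    · simp [hy hball]
    have hfar : δ ≤ ‖x₀ - y‖ := by rw [norm_sub_rev]; exact not_lt.1 hball
    have hWy : tailWeight β δ (x₀ - y) = ‖x₀ - y‖ ^ (-β) :=
      Set.indicator_of_mem (show x₀ - y ∈ {z : E | δ ≤ ‖z‖} from hfar) _
    rw [← ofReal_norm, ← ENNReal.ofReal_mul hM, norm_mul, norm_mul, hWy,
      norm_of_nonneg (rpow_nonneg (norm_nonneg _) _), ← mul_assoc, Real.norm_eq_abs]
    exact ENNReal.ofReal_le_ofReal (mul_le_mul_of_nonneg_right (hk _ hfar) (norm_nonneg _))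
  have hHolder : eLpNorm (fun y => tailWeight β δ (x₀ - y) * f y) 1 μ ≤
      eLpNorm (tailWeight β δ) q μ * eLpNorm f p μ := by
    rw [← eLpNorm_comp_measurePreserving (measurable_tailWeight β δ).aestronglyMeasurable
      (μ.measurePreserving_sub_left x₀)]
    have h := eLpNorm_le_eLpNorm_mul_eLpNorm'_of_norm (p := q) (q := p) (r := 1)
      hWmeas.aestronglyMeasurable hf.aestronglyMeasurable (· * ·) 1
      (ae_of_all _ fun y => by simp [norm_mul])
    rwa [ENNReal.coe_one, one_mul] at h
  have hlint : ∫⁻ y, ENNReal.ofReal ‖k (x₀ - y) * f y‖ ∂μ ≤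
      ENNReal.ofReal M * (eLpNorm (tailWeight β δ) q μ * eLpNorm f p μ) :=
    calc ∫⁻ y, ENNReal.ofReal ‖k (x₀ - y) * f y‖ ∂μ
        ≤ ∫⁻ y, ENNReal.ofReal M * ‖tailWeight β δ (x₀ - y) * f y‖ₑ ∂μ :=
          lintegral_mono_ae hpoint
      _ = ENNReal.ofReal M * eLpNorm (fun y => tailWeight β δ (x₀ - y) * f y) 1 μ := by
        rw [lintegral_const_mul' _ _ ENNReal.ofReal_ne_top, eLpNorm_one_eq_lintegral_enorm]
      _ ≤ _ := by gcongr
  calc |∫ y, k (x₀ - y) * f y ∂μ| ≤ (∫⁻ y, ENNReal.ofReal ‖k (x₀ - y) * f y‖ ∂μ).toReal := by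
        rw [← Real.norm_eq_abs]; exact norm_integral_le_lintegral_norm _
    _ ≤ (ENNReal.ofReal M * (eLpNorm (tailWeight β δ) q μ * eLpNorm f p μ)).toReal :=
        ENNReal.toReal_mono (by finiteness [hW.eLpNorm_ne_top, hf.eLpNorm_ne_top]) hlint
    _ = _ := by
        rw [ENNReal.toReal_mul, ENNReal.toReal_mul, ENNReal.toReal_ofReal hM, mul_assoc]

end TailWeight

lemma ENNReal.HolderConjugate.inv_toReal_add_inv_toReal {p q : ℝ≥0∞} [p.HolderConjugate q] :
    p.toReal⁻¹ + q.toReal⁻¹ = 1 := by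
  have h := congrArg ENNReal.toReal (ENNReal.HolderConjugate.inv_add_inv_eq_one p q)
  rwa [ENNReal.toReal_add (ENNReal.inv_ne_top.2 (ENNReal.HolderConjugate.ne_zero p q))
    (ENNReal.inv_ne_top.2 (ENNReal.HolderConjugate.ne_zero q p)), ENNReal.toReal_inv,
    ENNReal.toReal_inv, ENNReal.toReal_one] at h

theorem localization_estimate_general
    (d : ℕ) (α : ℝ) (hα : 0 < α) (hα1 : α ≤ 1)
    (p : ℝ≥0∞) (hp : 1 ≤ p)
    (x₀ : EuclideanSpace ℝ (Fin d)) (δ : ℝ) (hδ : 0 < δ) :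
    ∃ C : ℝ, 0 < C ∧
      ∀ f : EuclideanSpace ℝ (Fin d) → ℝ, MemLp f p volume →
        (∀ᵐ x : EuclideanSpace ℝ (Fin d) ∂volume, ‖x - x₀‖ < δ → f x = 0) →
        ∀ μ : ℝ, 1 < μ * δ →
          |∫ y, AKernel d α μ (x₀ - y) * f y| ≤
            C * μ ^ (-α / 2) * δ ^ (-((d : ℝ) / p.toReal + α / 2)) *
              (eLpNorm f p volume).toReal := by
  obtain ⟨K, hK, hA⟩ := exists_abs_AKernel_le d hα (by linarith)
  set β : ℝ := d + α / 2 with hβ_def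
  set q := p.conjExponent
  have : p.HolderConjugate q := .conjExponent hp
  have hβ : (finrank ℝ (EuclideanSpace ℝ (Fin d)) : ℝ) < β := by
    rw [finrank_euclideanSpace_fin]; linarith
  have hexp : (d : ℝ) / q.toReal - β = -((d : ℝ) / p.toReal + α / 2) := by
    have := ENNReal.HolderConjugate.inv_toReal_add_inv_toReal (p := p) (q := q)
    rw [div_eq_mul_inv, div_eq_mul_inv, eq_sub_of_add_eq' this, hβ_def]
    ring
  set W := (eLpNorm (tailWeight (E := EuclideanSpace ℝ (Fin d)) β 1) q volume).toReal
  refine ⟨K * W + 1, by positivity, fun f hf hvanish μ hμδ => ?_⟩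
  have hμ : 0 < μ := pos_of_mul_pos_left (one_pos.trans hμδ) hδ.le
  calc |∫ y, AKernel d α μ (x₀ - y) * f y|
      ≤ K * μ ^ (-(α / 2)) * (eLpNorm (tailWeight β δ) q volume).toReal *
          (eLpNorm f p volume).toReal :=
        abs_integral_mul_le_of_vanishing volume (by positivity)
          (fun z hz => hA μ hμ z (norm_pos_iff.1 (hδ.trans_le hz)))
          (memLp_tailWeight volume hβ hδ (ENNReal.HolderConjugate.one_le q p)) hf hvanish
    _ = K * W * μ ^ (-α / 2) * δ ^ (-((d : ℝ) / p.toReal + α / 2)) *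
          (eLpNorm f p volume).toReal := by
        rw [eLpNorm_tailWeight volume β hδ, ENNReal.toReal_mul,
          ENNReal.toReal_ofReal (by positivity), finrank_euclideanSpace_fin, hexp, neg_div]
        ring
    _ ≤ _ := by gcongr; linarith

/-- quantitative localization. For `0 < α ≤ 1` and `1 ≤ p < ∞` there is
`C = C(α,d,p)` such that if `f ∈ L^p` vanishes a.e. on the ball of radius `δ` around `x₀`
and `μδ > 1`, then
`|E_{α,μ} f(x₀)| = |(A_{α,μ} ⋆ f)(x₀)| ≤ C·μ^{−α/2}·δ^{−(d/p+α/2)}·‖f‖_p`;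
in particular `E_{α,μ} f(x₀) = O(μ^{−α/2})` as `μ → ∞`. -/
theorem localization_estimate
    (d : ℕ) (hd : 1 ≤ d) (α : ℝ) (hα : 0 < α) (hα1 : α ≤ 1)
    (p : ℝ≥0∞) (hp : 1 ≤ p) (hp' : p < ⊤)
    (x₀ : EuclideanSpace ℝ (Fin d)) (δ : ℝ) (hδ : 0 < δ) :
    ∃ C : ℝ, 0 < C ∧
      ∀ f : EuclideanSpace ℝ (Fin d) → ℝ, MemLp f p volume →
        (∀ᵐ x : EuclideanSpace ℝ (Fin d) ∂volume, ‖x - x₀‖ < δ → f x = 0) →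
        ∀ μ : ℝ, 1 < μ * δ →
          |∫ y, AKernel d α μ (x₀ - y) * f y| ≤
            C * μ ^ (-α / 2) * δ ^ (-((d : ℝ) / p.toReal + α / 2)) *
              (eLpNorm f p volume).toReal :=
  localization_estimate_general d α hα hα1 p hp x₀ δ hδ

end
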